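/- arXiv:1405.1313 — 3 statements merged into one kernel-verified Lean document; each statement's English description precedes it below -/
import Mathlib

section
/- (Brylawski–Lucas) Let [I_r | D1] over a field F represent a matroid M, let G(D1^#) be the associated bipartite graph, and let {b1,...,bk} be the edge set of a spanning forest of G(D1^#) (a basis of its cycle matroid). Then for every k-tuple (θ1,...,θk) of nonzero elements of F, there is a matrix [I_r | D2] obtained from [I_r | D1] by a sequence of row and column scalings by nonzero elements of F such that for each i, the entry of D2 in the position corresponding to bi equals θi. -/
/-!
Scaling row `i` by `ρ i` and column `j` by `γ j` multiplies the entry at `(i, j)` by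
`ρ i * γ j`, so it suffices to write the prescribed ratios `θ / D₁` on the forest edges as
products `ρ i * γ j` in the unit group `Fˣ`. On a finite forest any edge labelling by a
commutative group is such a product: strip a leaf edge, solve for the rest by induction, and
then choose the value at the leaf to fit the stripped edge, which meets no other edge there.
-/

namespace SimpleGraph

variable {V : Type*} {G : SimpleGraph V}

/-- The start of a longest path is a leaf: any other neighbour would either extend the path or
close a cycle. -/
theorem IsAcyclic.exists_adj_forall_adj_eq [Finite G.edgeSet] (hG : G.IsAcyclic)
    (hne : G.edgeSet.Nonempty) : ∃ u w, G.Adj u w ∧ ∀ w', G.Adj u w' → w' = w := by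
  obtain ⟨e, he⟩ := hne
  induction e using Sym2.ind with | h x y => ?_
  have hxy : G.Adj x y := he
  have : Nonempty V := ⟨x⟩
  obtain ⟨u, v, p, hp, hmax⟩ := Walk.exists_isPath_forall_isPath_length_le_length G
  have hnil : ¬p.Nil := fun hnil => by
    simpa [hnil.length_eq_zero] using hmax _ _ _ (Path.singleton hxy).2
  refine ⟨u, p.snd, p.adj_snd hnil, fun w huw => ?_⟩
  by_cases hw : w ∈ p.support
  · exact hG.eq_snd_of_adj_start hp huw hw
  · simpa using hmax _ _ _ (hp.cons hw (h := huw.symm))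

theorem IsAcyclic.exists_mul_eq {A : Type*} [CommGroup A] [Finite G.edgeSet]
    (hG : G.IsAcyclic) (c : Sym2 V → A) :
    ∃ f : V → A, ∀ ⦃u v⦄, G.Adj u v → f u * f v = c s(u, v) := by
  classical
  induction hn : G.edgeSet.ncard generalizing G with
  | zero =>
    have hempty : G.edgeSet = ∅ := (Set.ncard_eq_zero (Set.toFinite _)).1 hn
    exact ⟨1, fun u v huv => by simpa [hempty] using G.mem_edgeSet.2 huv⟩
  | succ n ih =>
    have hne : G.edgeSet.Nonempty := Set.nonempty_of_ncard_ne_zero (by omega)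
    obtain ⟨u, w, huw, hleaf⟩ := hG.exists_adj_forall_adj_eq hne
    set H := G.deleteEdges {s(u, w)}
    have : Finite H.edgeSet := Finite.Set.subset _ (edgeSet_mono (G.deleteEdges_le _))
    have hH : H.edgeSet.ncard = n := by
      rw [edgeSet_deleteEdges, Set.ncard_sdiff_singleton_of_mem (G.mem_edgeSet.2 huw), hn,
        Nat.add_sub_cancel]
    obtain ⟨f, hf⟩ := ih (hG.anti (G.deleteEdges_le _)) hH
    refine ⟨Function.update f u (c s(u, w) / f w), fun x y hxy => ?_⟩
    by_cases he : s(x, y) = s(u, w)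
    · rcases Sym2.eq_iff.1 he with ⟨rfl, rfl⟩ | ⟨rfl, rfl⟩
      · simp [huw.ne']
      · simp [huw.ne', Sym2.eq_swap]
    · have hx : x ≠ u := by rintro rfl; exact he (by rw [hleaf y hxy])
      have hy : y ≠ u := by rintro rfl; exact he (by rw [hleaf x hxy.symm, Sym2.eq_swap])
      simpa [hx, hy] using hf ((deleteEdges_adj ..).2 ⟨hxy, he⟩)

end SimpleGraph

section Bipartite

variable {α β A : Type*} [CommGroup A]

/-- For the set of nonzero positions of a matrix `D`, this is the graph `G(D^#)`. -/
def bipartiteGraphOf (t : Set (α × β)) : SimpleGraph (α ⊕ β) :=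
  SimpleGraph.fromEdgeSet ((fun p : α × β => s(Sum.inl p.1, Sum.inr p.2)) '' t)

def bipartiteLabel (c : α × β → A) : α ⊕ β → α ⊕ β → A
  | .inl i, .inr j => c (i, j)
  | .inr j, .inl i => c (i, j)
  | _, _ => 1

theorem bipartiteLabel_comm (c : α × β → A) (u v : α ⊕ β) :
    bipartiteLabel c u v = bipartiteLabel c v u := by
  cases u <;> cases v <;> rfl

theorem exists_mul_eq_of_isAcyclic_bipartiteGraphOf {t : Set (α × β)} (ht : t.Finite)
    (hacyc : (bipartiteGraphOf t).IsAcyclic) (c : α × β → A) :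
    ∃ (ρ : α → A) (γ : β → A), ∀ p ∈ t, ρ p.1 * γ p.2 = c p := by
  have : Finite (bipartiteGraphOf t).edgeSet := by
    rw [bipartiteGraphOf, SimpleGraph.edgeSet_fromEdgeSet]
    exact ((ht.image _).sdiff).to_subtype
  obtain ⟨f, hf⟩ := hacyc.exists_mul_eq (Sym2.lift ⟨bipartiteLabel c, bipartiteLabel_comm c⟩)
  refine ⟨f ∘ Sum.inl, f ∘ Sum.inr, fun p hp => ?_⟩
  have hadj : (bipartiteGraphOf t).Adj (Sum.inl p.1) (Sum.inr p.2) :=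
    (SimpleGraph.fromEdgeSet_adj _).2 ⟨⟨p, hp, rfl⟩, Sum.inl_ne_inr⟩
  simpa [bipartiteLabel] using hf hadj

end Bipartite

/-- Brylawski–Lucas: let `[I_r | D₁]` over `F` represent a
matroid, and let `b 0, …, b (k-1)` be the (positions of the) edges of a
spanning forest of the associated bipartite graph `G(D₁^#)`, i.e. a maximal
acyclic set of nonzero positions of `D₁` (a basis of the cycle matroid).
Then for every `k`-tuple `θ` of nonzero elements of `F` there are row scaling
factors `ρ` and column scaling factors `γ` (all nonzero) such that the scaled
matrix has entry `θ l` at the position of `b l`, for every `l`. -/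
theorem brylawski_lucas
    {F : Type*} [Field F] {r s k : ℕ} (D₁ : Matrix (Fin r) (Fin s) F)
    (b : Fin k → Fin r × Fin s) (hb : Function.Injective b)
    (hforest : Maximal (fun t : Set (Fin r × Fin s) =>
        (∀ p ∈ t, D₁ p.1 p.2 ≠ 0) ∧
        (SimpleGraph.fromEdgeSet
          ((fun p : Fin r × Fin s => s(Sum.inl p.1, Sum.inr p.2)) '' t :
            Set (Sym2 (Fin r ⊕ Fin s)))).IsAcyclic)
      (Set.range b))
    (θ : Fin k → F) (hθ : ∀ l, θ l ≠ 0) :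
    ∃ (ρ : Fin r → F) (γ : Fin s → F),
      (∀ i, ρ i ≠ 0) ∧ (∀ j, γ j ≠ 0) ∧
      ∀ l, ρ (b l).1 * D₁ (b l).1 (b l).2 * γ (b l).2 = θ l := by
  have hD : ∀ l, D₁ (b l).1 (b l).2 ≠ 0 := fun l => hforest.1.1 _ ⟨l, rfl⟩
  let c : Fin k → Fˣ := fun l => Units.mk0 (θ l) (hθ l) / Units.mk0 _ (hD l)
  obtain ⟨ρ, γ, hργ⟩ := exists_mul_eq_of_isAcyclic_bipartiteGraphOf (Set.finite_range b)
    hforest.1.2 (Function.extend b c 1)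
  refine ⟨fun i => ρ i, fun j => γ j, fun i => (ρ i).ne_zero, fun j => (γ j).ne_zero,
    fun l => ?_⟩
  have h := congrArg Units.val (hργ (b l) ⟨l, rfl⟩)
  rw [hb.extend_apply] at h
  simp only [Units.val_mul, Units.val_div_eq_div_val, Units.val_mk0, c] at h
  rw [mul_right_comm, h, div_mul_cancel₀ _ (hD l)]
end

section
/- (Restricted column scaling) Let [I_r | D1] over a field F represent a matroid M, and let {b1,...,bk} be the edge set of a spanning forest of G(D1^#). Let (φ1,...,φk) be nonzero elements of F such that the entry of D1 at the position of bi is ±φi for each i. Then there is a matrix [I_r | D'] obtainable from [I_r | D1] by a sequence of row scalings and column scalings restricted to factors ±1, such that the entry of D' at the position of bi is φi for each i. -/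
/-!
Signs on the edges of a forest can always be realised as products of signs on the vertices:
adding the edges one at a time, each new edge is a bridge, so flipping the signs on one side
of it fixes the new edge without disturbing the old ones. Applied to the bipartite graph of
`D₁` with the sign of `D₁ (b l) / φ l` on the edge `b l`, the vertex signs on rows and columns
are the required scalings.
-/

open Set

namespace SimpleGraph

variable {V : Type*} {G : SimpleGraph V}

theorem IsBridge.exists_units_int_mul_eq {u v : V} (hbr : G.IsBridge s(u, v))
    (σ : Sym2 V → ℤˣ) {f : V → ℤˣ}
    (hf : ∀ ⦃a b⦄, (G.deleteEdges {s(u, v)}).Adj a b → f a * f b = σ s(a, b)) :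
    ∃ g : V → ℤˣ, ∀ ⦃a b⦄, G.Adj a b → g a * g b = σ s(a, b) := by
  classical
  set G' := G.deleteEdges {s(u, v)}
  set c := σ s(u, v) * (f u * f v)⁻¹
  have hc : c * c = 1 := Int.units_mul_self c
  set g : V → ℤˣ := fun w => if G'.Reachable u w then c * f w else f w
  have hgu : g u = c * f u := if_pos .rfl
  have hgv : g v = f v := if_neg (isBridge_iff.mp hbr)
  have hguv : g u * g v = σ s(u, v) := by simp [hgu, hgv, c, mul_assoc]
  refine ⟨g, fun a b hab => ?_⟩
  by_cases hedge : s(a, b) = s(u, v)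
  · rcases Sym2.eq_iff.mp hedge with ⟨rfl, rfl⟩ | ⟨rfl, rfl⟩
    · exact hguv
    · rw [mul_comm, hguv, Sym2.eq_swap]
  · have hab' : G'.Adj a b := (deleteEdges_adj ..).mpr ⟨hab, hedge⟩
    have hreach : G'.Reachable u a ↔ G'.Reachable u b :=
      ⟨fun h => h.trans hab'.reachable, fun h => h.trans hab'.symm.reachable⟩
    by_cases ha : G'.Reachable u a
    · simp only [g, ha, hreach.mp ha, if_true]
      rw [mul_mul_mul_comm, hc, one_mul, hf hab']
    · simp only [g, ha, mt hreach.mpr ha, if_false]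
      exact hf hab'

theorem IsAcyclic.exists_units_int_mul_eq (hG : G.IsAcyclic) (hfin : G.edgeSet.Finite)
    (σ : Sym2 V → ℤˣ) : ∃ f : V → ℤˣ, ∀ ⦃u v⦄, G.Adj u v → f u * f v = σ s(u, v) := by
  induction hn : G.edgeSet.ncard using Nat.strong_induction_on generalizing G with
  | _ n ih =>
  rcases G.edgeSet.eq_empty_or_nonempty with hempty | ⟨e, he⟩
  · exact ⟨1, fun u v huv => by simp [← mem_edgeSet, hempty] at huv⟩
  induction e using Sym2.ind with
  | h u v =>
  obtain ⟨f, hf⟩ := ih _ (hn ▸ ncard_sdiff_singleton_lt_of_mem he hfin)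
    (G := G.deleteEdges {s(u, v)}) (hG.anti (deleteEdges_le _))
    (by rw [edgeSet_deleteEdges]; exact hfin.sdiff) (by rw [edgeSet_deleteEdges])
  exact (isAcyclic_iff_forall_adj_isBridge.mp hG he).exists_units_int_mul_eq σ hf

end SimpleGraph

theorem Sym2.injective_mk_inl_inr {α β : Type*} :
    Function.Injective (fun p : α × β => (s(Sum.inl p.1, Sum.inr p.2) : Sym2 (α ⊕ β))) := by
  rintro ⟨i, j⟩ ⟨i', j'⟩ h
  simpa [Sym2.eq_iff] using h

theorem Int.cast_units_eq_one_or {R : Type*} [Ring R] (u : ℤˣ) :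
    ((u : ℤ) : R) = 1 ∨ ((u : ℤ) : R) = -1 := by
  rcases Int.units_eq_one_or u with rfl | rfl <;> simp

theorem restricted_brylawski_lucas_general
    {F : Type*} [Field F] {r s k : ℕ} (D₁ : Matrix (Fin r) (Fin s) F)
    (b : Fin k → Fin r × Fin s) (hb : Function.Injective b)
    (hforest : Maximal (fun t : Set (Fin r × Fin s) =>
        (∀ p ∈ t, D₁ p.1 p.2 ≠ 0) ∧
        (SimpleGraph.fromEdgeSet
          ((fun p : Fin r × Fin s => s(Sum.inl p.1, Sum.inr p.2)) '' t :
            Set (Sym2 (Fin r ⊕ Fin s)))).IsAcyclic)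
      (Set.range b))
    (φ : Fin k → F)
    (hφ : ∀ l, D₁ (b l).1 (b l).2 = φ l ∨ D₁ (b l).1 (b l).2 = -φ l) :
    ∃ (ρ : Fin r → F) (γ : Fin s → F),
      (∀ i, ρ i = 1 ∨ ρ i = -1) ∧ (∀ j, γ j = 1 ∨ γ j = -1) ∧
      ∀ l, ρ (b l).1 * D₁ (b l).1 (b l).2 * γ (b l).2 = φ l := by
  classical
  set edge := fun p : Fin r × Fin s => (s(Sum.inl p.1, Sum.inr p.2) : Sym2 (Fin r ⊕ Fin s))
  set sign : Fin k → ℤˣ := fun l => if D₁ (b l).1 (b l).2 = φ l then 1 else -1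
  have hsign (l : Fin k) : ((sign l : ℤ) : F) * D₁ (b l).1 (b l).2 = φ l := by
    by_cases h : D₁ (b l).1 (b l).2 = φ l
    · simp [sign, h]
    · simp only [sign, if_neg h, (hφ l).resolve_left h]
      simp
  obtain ⟨f, hf⟩ := hforest.1.2.exists_units_int_mul_eq (toFinite _)
    (Function.extend (edge ∘ b) sign 1)
  refine ⟨fun i => (f (.inl i) : ℤ), fun j => (f (.inr j) : ℤ),
    fun i => Int.cast_units_eq_one_or _, fun j => Int.cast_units_eq_one_or _, fun l => ?_⟩
  have hfl : f (.inl (b l).1) * f (.inr (b l).2) = sign l :=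
    (hf (SimpleGraph.fromEdgeSet_adj _ |>.mpr ⟨⟨b l, mem_range_self l, rfl⟩, Sum.inl_ne_inr⟩)).trans
      ((Sym2.injective_mk_inl_inr.comp hb).extend_apply sign 1 l)
  calc ((f (.inl (b l).1) : ℤ) : F) * D₁ (b l).1 (b l).2 * ((f (.inr (b l).2) : ℤ) : F)
      = (((f (.inl (b l).1) * f (.inr (b l).2) : ℤˣ) : ℤ) : F) * D₁ (b l).1 (b l).2 := by
        push_cast; ring
    _ = φ l := by rw [hfl, hsign]

/-- Restricted column scaling: with `[I_r | D₁]` over `F`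
representing a matroid and `b 0, …, b (k-1)` the edges of a spanning forest of
`G(D₁^#)` (a maximal acyclic set of nonzero positions of `D₁`), if `φ` is a
tuple of nonzero elements with the entry of `D₁` at `b l` equal to `± φ l`,
then `[I_r | D₁]` can be transformed, by row scalings and column scalings all
restricted to the factors `±1` (the only scalings that preserve the standard
form `[I_r | D']`), into a matrix whose entry at `b l` is `φ l` for each `l`. -/
theorem restricted_brylawski_lucas
    {F : Type*} [Field F] {r s k : ℕ} (D₁ : Matrix (Fin r) (Fin s) F)
    (b : Fin k → Fin r × Fin s) (hb : Function.Injective b)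
    (hforest : Maximal (fun t : Set (Fin r × Fin s) =>
        (∀ p ∈ t, D₁ p.1 p.2 ≠ 0) ∧
        (SimpleGraph.fromEdgeSet
          ((fun p : Fin r × Fin s => s(Sum.inl p.1, Sum.inr p.2)) '' t :
            Set (Sym2 (Fin r ⊕ Fin s)))).IsAcyclic)
      (Set.range b))
    (φ : Fin k → F) (hφ0 : ∀ l, φ l ≠ 0)
    (hφ : ∀ l, D₁ (b l).1 (b l).2 = φ l ∨ D₁ (b l).1 (b l).2 = -φ l) :
    ∃ (ρ : Fin r → F) (γ : Fin s → F),
      (∀ i, ρ i = 1 ∨ ρ i = -1) ∧ (∀ j, γ j = 1 ∨ γ j = -1) ∧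
      ∀ l, ρ (b l).1 * D₁ (b l).1 (b l).2 * γ (b l).2 = φ l :=
  restricted_brylawski_lucas_general D₁ b hb hforest φ hφ
end

section
/- (Pruning correctness) Let R = [I_{k} | A'] be a rank-r matrix in which the first k columns form an identity on the first k rows and zeros below. If some column of A' has more than 2 nonzero entries among its first k entries and all entries below the k-th are zero, then no sequence of pivots on entries in rows k+1,...,r followed by row permutations of those rows can transform R into a matrix [I_r | B] in which that column of B has at most 2 nonzero entries. -/
open Set

/-- One step of the allowed operations on the rows of a matrix (tracked on a
single column `x`): a pivot-type row operation adding a multiple of a row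
`s` with `k ≤ s` to another row, or a swap of two rows with indices `≥ k`. -/
def PivotStep {F : Type*} [Field F] {r : ℕ} (k : ℕ) (x y : Fin r → F) : Prop :=
  (∃ (s t : Fin r) (c : F), k ≤ (s : ℕ) ∧ s ≠ t ∧
    y = Function.update x t (x t + c * x s)) ∨
  (∃ s t : Fin r, k ≤ (s : ℕ) ∧ k ≤ (t : ℕ) ∧ y = x ∘ Equiv.swap s t)

/-- pruning correctness: if a column `x` has more than two
nonzero entries among its first `k` entries and all entries below the `k`-th
are zero, then no sequence of pivots on rows `k+1, …, r` and permutations of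
those rows can bring it to a column with at most two nonzero entries among its
first `k` entries (hence `[I_r | B]` with that column having `≤ 2` nonzeros is
unreachable). -/
theorem pruning_correctness
    {F : Type*} [Field F] {r : ℕ} (k : ℕ) (x : Fin r → F)
    (hx : 2 < ({i : Fin r | (i : ℕ) < k ∧ x i ≠ 0}).ncard)
    (hzero : ∀ i : Fin r, k ≤ (i : ℕ) → x i = 0) :
    ∀ y : Fin r → F, Relation.ReflTransGen (PivotStep k) x y →
      2 < ({i : Fin r | (i : ℕ) < k ∧ y i ≠ 0}).ncard := by
  have key : ∀ y : Fin r → F, Relation.ReflTransGen (PivotStep k) x y →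
      (∀ i : Fin r, (i : ℕ) < k → y i = x i) ∧ (∀ i : Fin r, k ≤ (i : ℕ) → y i = 0) := by
    intro y h
    induction h with
    | refl => exact ⟨fun i _ => rfl, hzero⟩
    | tail _ hstep ih =>
      obtain ⟨ih1, ih2⟩ := ih
      rcases hstep with ⟨s, t, c, hs, hst, rfl⟩ | ⟨s, t, hs, ht, rfl⟩
      · have hzs : _ = (0 : F) := ih2 s hs
        constructor
        · intro i hi
          rcases eq_or_ne i t with rfl | hit
          · simp [Function.update_self, hzs, ih1 i hi]
          · simp [Function.update_of_ne hit, ih1 i hi]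
        · intro i hi
          rcases eq_or_ne i t with rfl | hit
          · simp [Function.update_self, hzs, ih2 i hi]
          · simp [Function.update_of_ne hit, ih2 i hi]
      · constructor
        · intro i hi
          have his : i ≠ s := fun h => absurd (h ▸ hi) (by omega)
          have hit : i ≠ t := fun h => absurd (h ▸ hi) (by omega)
          simp [Function.comp, Equiv.swap_apply_of_ne_of_ne his hit, ih1 i hi]
        · intro i hi
          simp only [Function.comp]
          rcases eq_or_ne i s with rfl | his
          · simp [Equiv.swap_apply_left, ih2 t ht]
          rcases eq_or_ne i t with rfl | hit
          · simp [Equiv.swap_apply_right, ih2 s hs]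
          · simp [Equiv.swap_apply_of_ne_of_ne his hit, ih2 i hi]
  intro y hy
  obtain ⟨h1, _⟩ := key y hy
  have : {i : Fin r | (i : ℕ) < k ∧ y i ≠ 0} = {i : Fin r | (i : ℕ) < k ∧ x i ≠ 0} := by
    ext i; simp only [mem_setOf_eq, and_congr_right_iff]; intro hi
    rw [h1 i hi]
  rwa [this]
end
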